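/- arXiv:0809.3558 — 4 statements merged into one kernel-verified Lean document; each statement's English description precedes it below -/
import Mathlib

section
/- Let θ = π/m with m ≥ 2 an integer, and for an integer k with 1 ≤ k ≤ m−2 set p_k = sin(kθ)/sin(θ). Then the discriminant (p_k² + p_{k+1}² − 1)² − 4(p_k p_{k+1})² is strictly negative. -/
open Real

/-- sin is at least sin θ on [θ, π - θ] for 0 ≤ θ. -/
lemma sin_ge_aux {θ x : ℝ} (h0 : 0 ≤ θ) (h1 : θ ≤ x) (h2 : x ≤ π - θ) :
    sin θ ≤ sin x := by
  rcases le_or_gt x (π / 2) with hx | hx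
  · exact Real.sin_le_sin_of_le_of_le_pi_div_two (by linarith [Real.pi_pos]) hx h1
  · rw [← Real.sin_pi_sub x]
    exact Real.sin_le_sin_of_le_of_le_pi_div_two (by linarith [Real.pi_pos])
      (by linarith) (by linarith)

lemma abs_aux {s c c2 : ℝ} (hs : 0 < s) (h1 : -c2 < c) (h2 : c < c2) :
    |2 * s * c| < 2 * s * c2 := by
  rw [abs_lt]
  constructor <;> nlinarith

lemma disc_aux {a b : ℝ} (ha : 1 ≤ a) (hb : 0 < b) (h : |b - a| < 1) :
    (a ^ 2 + b ^ 2 - 1) ^ 2 - 4 * (a * b) ^ 2 < 0 := by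
  rw [abs_lt] at h
  have h1 : (a - b) ^ 2 < 1 := by nlinarith [h.1, h.2]
  have h2 : 1 < (a + b) ^ 2 := by nlinarith
  nlinarith [h1, h2]

/-- For `θ = π/m` (`m ≥ 2`) and `p_j = sin(jθ)/sin θ`, the discriminant
`(p_k² + p_{k+1}² − 1)² − 4 (p_k p_{k+1})²` is negative for `1 ≤ k ≤ m − 2`. -/
theorem discriminant_neg (m k : ℕ) (hm : 2 ≤ m) (hk1 : 1 ≤ k) (hk2 : k ≤ m - 2)
    (θ : ℝ) (hθ : θ = π / m) (p : ℕ → ℝ) (hp : ∀ j, p j = sin (j * θ) / sin θ) :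
    (p k ^ 2 + p (k + 1) ^ 2 - 1) ^ 2 - 4 * (p k * p (k + 1)) ^ 2 < 0 := by
  have hkm : k + 2 ≤ m := by omega
  have hmpos : (0:ℝ) < m := by positivity
  have hθpos : 0 < θ := by rw [hθ]; positivity
  have hθle : θ ≤ π / 2 := by
    rw [hθ]
    rw [div_le_div_iff₀ hmpos two_pos]
    have : (2:ℝ) ≤ m := by exact_mod_cast hm
    nlinarith [Real.pi_pos]
  have hmθ : (m:ℝ) * θ = π := by
    rw [hθ]; field_simp
  have hk1m : ((k:ℝ) + 1) * θ ≤ π - θ := by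
    have : ((k:ℝ) + 2) ≤ m := by exact_mod_cast hkm
    nlinarith
  have hkθ : (k:ℝ) * θ ≤ π - θ := by nlinarith
  have hkθ1 : θ ≤ (k:ℝ) * θ := by
    have : (1:ℝ) ≤ k := by exact_mod_cast hk1
    nlinarith
  have hsθ : 0 < sin θ := Real.sin_pos_of_pos_of_lt_pi hθpos (by linarith [Real.pi_pos])
  -- a = p k ≥ 1
  have ha1 : 1 ≤ p k := by
    rw [hp, le_div_iff₀ hsθ, one_mul]
    exact sin_ge_aux hθpos.le hkθ1 hkθ
  have hb0 : 0 < p (k + 1) := by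
    rw [hp]
    apply div_pos _ hsθ
    apply Real.sin_pos_of_pos_of_lt_pi
    · push_cast; nlinarith
    · push_cast; linarith
  -- |a - b| < 1
  have hsin2 : sin θ = 2 * sin (θ/2) * cos (θ/2) := by
    rw [← Real.sin_two_mul]; ring_nf
  have hsθ2 : 0 < sin (θ/2) :=
    Real.sin_pos_of_pos_of_lt_pi (by linarith) (by linarith [Real.pi_pos])
  have hcθ2 : 0 < cos (θ/2) := by nlinarith
  have hdiff : sin ((k+1:ℕ) * θ) - sin ((k:ℕ) * θ)
      = 2 * sin (θ/2) * cos (((2*k+1:ℕ)) * θ / 2) := by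
    rw [Real.sin_sub_sin]
    push_cast
    ring_nf
  have hcub : cos (((2*k+1:ℕ):ℝ) * θ / 2) < cos (θ/2) := by
    apply Real.cos_lt_cos_of_nonneg_of_le_pi (by linarith)
    · push_cast; nlinarith
    · push_cast
      have : (1:ℝ) ≤ k := by exact_mod_cast hk1
      nlinarith
  have hclb : -cos (θ/2) < cos (((2*k+1:ℕ):ℝ) * θ / 2) := by
    have := Real.cos_lt_cos_of_nonneg_of_le_pi (x := (((2*k+1:ℕ):ℝ) * θ / 2))
      (y := π - θ/2) (by push_cast; positivity) (by linarith) ?_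
    · rwa [Real.cos_pi_sub] at this
    · push_cast; nlinarith
  have habs : |p (k+1) - p k| < 1 := by
    rw [hp, hp, div_sub_div_same, abs_div, abs_of_pos hsθ, div_lt_one hsθ, hdiff, hsin2]
    exact abs_aux hsθ2 hclb hcub
  exact disc_aux ha1 hb0 habs
end

section
/- For real numbers a, b not both zero and θ = π/m with m ≥ 2, 1 ≤ k ≤ m−2, setting p_j = sin(jθ)/sin θ, the quantity (a² + b²) p_k p_{k+1} + ab (p_k² + p_{k+1}² − 1) is nonzero. -/
open Real


private lemma det_aux (A B s c a b : ℝ) (hs : s ≠ 0)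
    (ht : A ^ 2 + B ^ 2 - s ^ 2 = 2 * c * A * B) :
    (a ^ 2 + b ^ 2) * (A / s * (B / s)) + a * b * ((A / s) ^ 2 + (B / s) ^ 2 - 1) =
      A * B / s ^ 2 * (a ^ 2 + b ^ 2 + 2 * a * b * c) := by
  field_simp
  linear_combination (a * b) * ht

set_option maxHeartbeats 1000000 in
/-- For `θ = π/m` (`m ≥ 2`), `1 ≤ k ≤ m−2`, `p_j = sin(jθ)/sin θ` and `(a,b) ≠ (0,0)`,
the quantity `(a² + b²) p_k p_{k+1} + ab (p_k² + p_{k+1}² − 1)` is nonzero. -/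
theorem det_expression_ne_zero (m k : ℕ) (hm : 2 ≤ m) (hk1 : 1 ≤ k) (hk2 : k ≤ m - 2)
    (θ : ℝ) (hθ : θ = π / m) (p : ℕ → ℝ) (hp : ∀ j, p j = sin (j * θ) / sin θ)
    (a b : ℝ) (hab : a ≠ 0 ∨ b ≠ 0) :
    (a ^ 2 + b ^ 2) * (p k * p (k + 1)) + a * b * (p k ^ 2 + p (k + 1) ^ 2 - 1) ≠ 0 := by
  have hm' : (2:ℝ) ≤ (m:ℝ) := by exact_mod_cast hm
  have hk1' : (1:ℝ) ≤ (k:ℝ) := by exact_mod_cast hk1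
  have hk2n : k + 2 ≤ m := by omega
  have hk2' : (k:ℝ) + 2 ≤ (m:ℝ) := by exact_mod_cast hk2n
  have hπ := pi_pos
  have hθ0 : 0 < θ := by
    rw [hθ]; apply div_pos hπ; linarith
  have hmθ : (m:ℝ) * θ = π := by
    rw [hθ]; field_simp
  have hθπ : θ < π := by nlinarith
  have hθhalf : θ ≤ π / 2 := by nlinarith
  have hs : 0 < sin θ := sin_pos_of_pos_of_lt_pi hθ0 hθπ
  have hA0 : 0 < (k:ℝ) * θ := by nlinarith
  have hAπ : (k:ℝ) * θ < π := by nlinarith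
  have hB0 : 0 < ((k:ℝ) + 1) * θ := by nlinarith
  have hBπ : ((k:ℝ) + 1) * θ < π := by nlinarith
  have hsA : 0 < sin ((k:ℝ) * θ) := sin_pos_of_pos_of_lt_pi hA0 hAπ
  have hsB : 0 < sin (((k:ℝ) + 1) * θ) := sin_pos_of_pos_of_lt_pi hB0 hBπ
  have trig : sin ((k:ℝ) * θ) ^ 2 + sin (((k:ℝ) + 1) * θ) ^ 2 - sin θ ^ 2 =
      2 * cos θ * sin ((k:ℝ) * θ) * sin (((k:ℝ) + 1) * θ) := by
    have hBe : ((k:ℝ) + 1) * θ = (k:ℝ) * θ + θ := by ring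
    rw [hBe, sin_add]
    linear_combination (-(sin ((k:ℝ) * θ) ^ 2)) * (sin_sq_add_cos_sq θ) +
      (sin θ ^ 2) * (sin_sq_add_cos_sq ((k:ℝ) * θ))
  have hc1 : cos θ < 1 := by
    have h := cos_lt_cos_of_nonneg_of_le_pi le_rfl hθπ.le hθ0
    simpa using h
  have hc0 : 0 ≤ cos θ := cos_nonneg_of_mem_Icc ⟨by linarith, hθhalf⟩
  have hq : 0 < a ^ 2 + b ^ 2 + 2 * a * b * cos θ := by
    have hab2 : 0 < a ^ 2 + b ^ 2 := by
      rcases hab with ha | hb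
      · have : 0 < a ^ 2 := by positivity
        nlinarith [sq_nonneg b]
      · have : 0 < b ^ 2 := by positivity
        nlinarith [sq_nonneg a]
    nlinarith [mul_nonneg hc0 (sq_nonneg (a + b)),
      mul_pos (by linarith : (0:ℝ) < 1 - cos θ) hab2]
  have hs2 : sin θ ^ 2 ≠ 0 := by positivity
  have hE : (a ^ 2 + b ^ 2) * (p k * p (k + 1)) + a * b * (p k ^ 2 + p (k + 1) ^ 2 - 1) =
      (sin ((k:ℝ) * θ) * sin (((k:ℝ) + 1) * θ) / sin θ ^ 2) *
        (a ^ 2 + b ^ 2 + 2 * a * b * cos θ) := by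
    rw [hp, hp]
    push_cast
    exact det_aux _ _ _ _ a b hs.ne' (by linear_combination trig)
  rw [hE]
  exact ne_of_gt (mul_pos (div_pos (mul_pos hsA hsB) (pow_pos hs 2)) hq)
end

section
/- Let W be a finite real reflection group acting on V = ℝⁿ, J the ideal of ℝ[V] generated by W-invariant polynomials with zero constant term, and R = ℝ[V]/J the coinvariant ring. If ℓ ∈ R₁ is a strong Lefschetz element of R, then ℓ is not fixed by any reflection of W. -/
open MvPolynomial

/-- The action of `g ∈ GL(n, ℝ)` on polynomials: `(g • f)(x) = f(g⁻¹ x)`. -/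
noncomputable def polyAct {n : ℕ} (g : GL (Fin n) ℝ) :
    MvPolynomial (Fin n) ℝ →ₐ[ℝ] MvPolynomial (Fin n) ℝ :=
  aeval fun i => ∑ j, ((↑(g⁻¹) : Matrix (Fin n) (Fin n) ℝ) i j) • X j

/-- `g ∈ GL(n, ℝ)` is a reflection: an involution different from the identity whose
fixed space is a hyperplane. -/
def IsReflection {n : ℕ} (g : GL (Fin n) ℝ) : Prop :=
  g ≠ 1 ∧ g * g = 1 ∧
    Module.finrank ℝ
      (LinearMap.ker (Matrix.toLin' ((↑g : Matrix (Fin n) (Fin n) ℝ) - 1))) = n - 1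

/-- The ideal of `ℝ[x₁,…,xₙ]` generated by the `W`-invariant polynomials with zero
constant term. -/
noncomputable def coinvIdeal {n : ℕ} (W : Subgroup (GL (Fin n) ℝ)) :
    Ideal (MvPolynomial (Fin n) ℝ) :=
  Ideal.span {f | (∀ w ∈ W, polyAct w f = f) ∧ constantCoeff f = 0}

/-- The degree-`d` homogeneous component of the coinvariant ring `R = ℝ[V]/J`. -/
noncomputable def coinvComponent {n : ℕ} (W : Subgroup (GL (Fin n) ℝ)) (d : ℕ) :
    Submodule ℝ (MvPolynomial (Fin n) ℝ ⧸ coinvIdeal W) :=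
  Submodule.map (Ideal.Quotient.mkₐ ℝ (coinvIdeal W)).toLinearMap
    (homogeneousSubmodule (Fin n) ℝ d)



noncomputable def Lmap {n : ℕ} : (Fin n → ℝ) →ₗ[ℝ] MvPolynomial (Fin n) ℝ where
  toFun c := ∑ j, c j • X j
  map_add' a b := by simp [add_smul, Finset.sum_add_distrib]
  map_smul' t a := by simp [Finset.smul_sum, smul_smul]

lemma polyAct_X {n : ℕ} (g : GL (Fin n) ℝ) (i : Fin n) :
    polyAct g (X i) = Lmap (fun j => (↑(g⁻¹) : Matrix (Fin n) (Fin n) ℝ) i j) := by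
  simp [polyAct, Lmap]

lemma X_eq_Lmap {n : ℕ} (i : Fin n) :
    (X i : MvPolynomial (Fin n) ℝ) = Lmap (Pi.single i 1) := by
  show _ = ∑ j, (Pi.single i (1:ℝ) : Fin n → ℝ) j • X j
  rw [Finset.sum_eq_single i]
  · simp
  · intro j _ hj; simp [Pi.single_apply, hj]
  · simp

lemma polyAct_C {n : ℕ} (g : GL (Fin n) ℝ) (a : ℝ) :
    polyAct g (C a) = C a := by
  simp [polyAct, algebraMap_eq]

lemma polyAct_Lmap {n : ℕ} (g : GL (Fin n) ℝ) (c : Fin n → ℝ) :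
    polyAct g (Lmap c) = Lmap (Matrix.vecMul c (↑(g⁻¹) : Matrix (Fin n) (Fin n) ℝ)) := by
  show polyAct g (∑ j, c j • X j) = _
  rw [map_sum]
  simp_rw [map_smul, polyAct_X, ← map_smul, ← map_sum]
  congr 1
  ext j
  simp [Matrix.vecMul, dotProduct, Finset.sum_apply, mul_comm]

lemma Lmap_coeff {n : ℕ} (c : Fin n → ℝ) (i : Fin n) :
    coeff (Finsupp.single i 1) (Lmap c) = c i := by
  show coeff _ (∑ j, c j • X j) = c i
  rw [coeff_sum]
  rw [Finset.sum_eq_single i]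
  · simp [coeff_smul, coeff_X]
  · intro j _ hj
    have : coeff (Finsupp.single i 1) (X j : MvPolynomial (Fin n) ℝ) = 0 := by
      rw [coeff_X']
      simp only [Finsupp.single_eq_single_iff]
      simp [hj]
    simp [coeff_smul, this]
  · simp

lemma Lmap_inj {n : ℕ} : Function.Injective (Lmap (n := n)) := by
  intro a b h
  funext i
  rw [← Lmap_coeff a i, ← Lmap_coeff b i, h]

lemma Lmap_homog {n : ℕ} (c : Fin n → ℝ) : (Lmap c).IsHomogeneous 1 := by
  show IsHomogeneous (∑ j, c j • X j) 1
  apply IsHomogeneous.sum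
  intro j _
  rw [smul_eq_C_mul]
  exact isHomogeneous_C_mul_X _ _

lemma polyAct_polyAct {n : ℕ} (g h : GL (Fin n) ℝ) (f : MvPolynomial (Fin n) ℝ) :
    polyAct g (polyAct h f) = polyAct (g * h) f := by
  have : (polyAct g).comp (polyAct h) = polyAct (g * h) := by
    apply MvPolynomial.algHom_ext
    intro i
    simp only [AlgHom.comp_apply, polyAct_X, polyAct_Lmap]
    rw [mul_inv_rev]
    congr 1
  rw [← this]; rfl

lemma polyAct_one {n : ℕ} (f : MvPolynomial (Fin n) ℝ) : polyAct 1 f = f := by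
  have : polyAct (n := n) 1 = AlgHom.id ℝ _ := by
    apply MvPolynomial.algHom_ext
    intro i
    rw [polyAct_X]
    show ∑ j, ((1 : Matrix (Fin n) (Fin n) ℝ) i j) • X j = X i
    rw [Finset.sum_eq_single i] <;> simp [Matrix.one_apply]
    intro j hj; simp [Matrix.one_apply, Ne.symm hj]
  rw [this]; rfl

lemma polyAct_homog {n : ℕ} (g : GL (Fin n) ℝ) {f : MvPolynomial (Fin n) ℝ} {d : ℕ}
    (hf : f.IsHomogeneous d) : (polyAct g f).IsHomogeneous d := by
  have h1 : ∀ i, IsHomogeneous (∑ j, ((↑(g⁻¹) : Matrix (Fin n) (Fin n) ℝ) i j) • X j) 1 :=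
    fun i => Lmap_homog _
  have h2 := hf.aeval _ h1
  rw [one_mul] at h2
  exact h2

open Module Matrix in
lemma anti_vec {n : ℕ} (A : Matrix (Fin n) (Fin n) ℝ) (h1 : A ≠ 1) (h2 : A * A = 1)
    (h3 : finrank ℝ (LinearMap.ker (Matrix.toLin' (A - 1))) = n - 1) :
    ∃ c : Fin n → ℝ, c ≠ 0 ∧ Matrix.vecMul c A = -c ∧
      ∀ c' : Fin n → ℝ, Matrix.vecMul c' A = -c' → ∃ t : ℝ, c' = t • c := by
  have hn : 1 ≤ n := by
    rcases Nat.eq_zero_or_pos n with h | h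
    · exfalso; apply h1; subst h; apply Subsingleton.elim
    · exact h
  set K₁ := LinearMap.ker (Matrix.toLin' (A - 1)) with hK₁
  set K₂ := LinearMap.ker (Matrix.toLin' (A + 1)) with hK₂
  have hAA : ∀ x : Fin n → ℝ, A *ᵥ (A *ᵥ x) = x := by
    intro x; rw [Matrix.mulVec_mulVec, h2, Matrix.one_mulVec]
  have hmem₁ : ∀ x, x ∈ K₁ ↔ A *ᵥ x = x := by
    intro x
    rw [hK₁, LinearMap.mem_ker, Matrix.toLin'_apply, Matrix.sub_mulVec, Matrix.one_mulVec,
      sub_eq_zero]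
  have hmem₂ : ∀ x, x ∈ K₂ ↔ A *ᵥ x = -x := by
    intro x
    rw [hK₂, LinearMap.mem_ker, Matrix.toLin'_apply, Matrix.add_mulVec, Matrix.one_mulVec,
      add_eq_zero_iff_eq_neg]
  have hsup : K₁ ⊔ K₂ = ⊤ := by
    rw [eq_top_iff]
    intro x _
    have : x = (2⁻¹ : ℝ) • (x + A *ᵥ x) + (2⁻¹ : ℝ) • (x - A *ᵥ x) := by
      module
    rw [this]
    apply Submodule.add_mem_sup
    · apply Submodule.smul_mem
      rw [hmem₁, Matrix.mulVec_add, hAA, add_comm]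
    · apply Submodule.smul_mem
      rw [hmem₂, Matrix.mulVec_sub, hAA, neg_sub]
  have hinf : K₁ ⊓ K₂ = ⊥ := by
    rw [eq_bot_iff]
    intro x hx
    rw [Submodule.mem_inf] at hx
    obtain ⟨hx1, hx2⟩ := hx
    rw [hmem₁] at hx1; rw [hmem₂] at hx2
    have hxx : x = -x := hx1.symm.trans hx2
    have : x = 0 := by
      funext i
      have := congrFun hxx i
      simp only [Pi.neg_apply] at this
      simp only [Pi.zero_apply]
      linarith
    simp [this]
  have hfr : finrank ℝ K₁ + finrank ℝ K₂ = n := by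
    have := Submodule.finrank_sup_add_finrank_inf_eq K₁ K₂
    rw [hsup, hinf] at this
    simpa [finrank_top, Module.finrank_pi] using this.symm
  have hK2 : finrank ℝ K₂ = 1 := by
    rw [h3] at hfr
    omega
  -- transpose kernel
  set K := LinearMap.ker (Matrix.toLin' (Aᵀ + 1)) with hK
  have hrank : ∀ B : Matrix (Fin n) (Fin n) ℝ,
      finrank ℝ (LinearMap.ker (Matrix.toLin' B)) + B.rank = n := by
    intro B
    have h := LinearMap.finrank_range_add_finrank_ker (Matrix.toLin' B)
    rw [Module.finrank_pi, Fintype.card_fin] at h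
    have hr : B.rank = finrank ℝ (LinearMap.range (Matrix.toLin' B)) := by
      rw [Matrix.rank, Matrix.toLin'_apply']
    rw [hr]
    omega
  have hKfr : finrank ℝ K = 1 := by
    have e1 := hrank (A + 1)
    have e2 := hrank (Aᵀ + 1)
    have e3 : (Aᵀ + 1).rank = (A + 1).rank := by
      rw [show Aᵀ + 1 = (A + 1)ᵀ by rw [Matrix.transpose_add, Matrix.transpose_one],
        Matrix.rank_transpose]
    rw [e3] at e2
    rw [← hK₂] at e1
    rw [← hK] at e2
    omega
  have hmemK : ∀ c : Fin n → ℝ, c ∈ K ↔ Matrix.vecMul c A = -c := by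
    intro c
    rw [hK, LinearMap.mem_ker, Matrix.toLin'_apply, Matrix.add_mulVec, Matrix.one_mulVec,
      Matrix.mulVec_transpose, add_eq_zero_iff_eq_neg]
  have hKbot : K ≠ ⊥ := by
    intro h
    rw [h] at hKfr
    simp at hKfr
  obtain ⟨c, hcK, hc0⟩ := Submodule.exists_mem_ne_zero_of_ne_bot hKbot
  refine ⟨c, hc0, (hmemK c).mp hcK, ?_⟩
  intro c' hc'
  have hc'K : c' ∈ K := (hmemK c').mpr hc'
  have hspan : (ℝ ∙ c) = K := by
    apply Submodule.eq_of_le_of_finrank_eq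
    · rwa [Submodule.span_singleton_le_iff_mem]
    · rw [finrank_span_singleton hc0, hKfr]
  rw [← hspan, Submodule.mem_span_singleton] at hc'K
  obtain ⟨t, ht⟩ := hc'K
  exact ⟨t, ht.symm⟩

lemma coinvIdeal_le_ker {n : ℕ} (W : Subgroup (GL (Fin n) ℝ)) :
    coinvIdeal W ≤ RingHom.ker (constantCoeff (σ := Fin n) (R := ℝ)) := by
  rw [coinvIdeal, Ideal.span_le]
  intro f hf
  exact hf.2

lemma polyAct_coinvIdeal {n : ℕ} (W : Subgroup (GL (Fin n) ℝ)) {s : GL (Fin n) ℝ}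
    (hs : s ∈ W) {f : MvPolynomial (Fin n) ℝ} (hf : f ∈ coinvIdeal W) :
    polyAct s f ∈ coinvIdeal W := by
  have h1 : polyAct s f ∈ Ideal.map (polyAct s) (coinvIdeal W) :=
    Ideal.mem_map_of_mem _ hf
  have h2 : Ideal.map (polyAct s) (coinvIdeal W) ≤ coinvIdeal W := by
    rw [coinvIdeal, Ideal.map_span, Ideal.span_le]
    rintro g ⟨f', hf', rfl⟩
    rw [hf'.1 s hs]
    exact Ideal.subset_span hf'
  exact h2 h1

lemma dvd_sub_polyAct {n : ℕ} (s : GL (Fin n) ℝ) (M : Matrix (Fin n) (Fin n) ℝ)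
    (hMact : ∀ i : Fin n, polyAct s (X i) = Lmap (fun j => M i j))
    (hMM : M * M = 1)
    (c : Fin n → ℝ)
    (hc : ∀ c' : Fin n → ℝ, Matrix.vecMul c' M = -c' → ∃ t : ℝ, c' = t • c)
    (f : MvPolynomial (Fin n) ℝ) : Lmap c ∣ (f - polyAct s f) := by
  have hX : ∀ i : Fin n, Lmap c ∣ (X i - polyAct s (X i)) := by
    intro i
    rw [hMact, X_eq_Lmap, ← map_sub]
    have hanti : Matrix.vecMul (Pi.single i 1 - fun j => M i j) M
        = -(Pi.single i 1 - fun j => M i j) := by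
      have h1 : Matrix.vecMul ((Pi.single i (1:ℝ)) : Fin n → ℝ) M = fun j => M i j := by
        funext j
        simp only [Matrix.vecMul, dotProduct]
        rw [Finset.sum_eq_single i]
        · simp
        · intro k _ hk; simp [Pi.single_apply, hk]
        · simp
      have h2 : Matrix.vecMul (fun j => M i j) M = (Pi.single i (1:ℝ) : Fin n → ℝ) := by
        funext j
        have h3 : (M * M) i j = (1 : Matrix (Fin n) (Fin n) ℝ) i j := by rw [hMM]
        rw [Matrix.mul_apply] at h3
        simp only [Matrix.vecMul, dotProduct]
        rw [h3, Matrix.one_apply, Pi.single_apply]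
        by_cases h : i = j
        · simp [h]
        · simp [h, Ne.symm h]
      rw [Matrix.sub_vecMul, h1, h2, neg_sub]
    obtain ⟨t, ht⟩ := hc _ hanti
    rw [ht, map_smul, smul_eq_C_mul]
    exact Dvd.intro_left _ rfl
  induction f using MvPolynomial.induction_on with
  | C a => rw [polyAct_C, sub_self]; exact dvd_zero _
  | add f g ihf ihg =>
      have : f + g - polyAct s (f + g) = (f - polyAct s f) + (g - polyAct s g) := by
        rw [map_add]; ring
      rw [this]; exact dvd_add ihf ihg
  | mul_X f i ihf =>
      have : f * X i - polyAct s (f * X i)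
          = f * (X i - polyAct s (X i)) + (f - polyAct s f) * polyAct s (X i) := by
        rw [map_mul]; ring
      rw [this]
      exact dvd_add (Dvd.dvd.mul_left (hX i) f) (Dvd.dvd.mul_right ihf _)

lemma quot_mem {n : ℕ} (W : Subgroup (GL (Fin n) ℝ)) {s : GL (Fin n) ℝ} (hsW : s ∈ W)
    (c : Fin n → ℝ) (hα0 : Lmap c ≠ 0)
    (hdvd : ∀ f : MvPolynomial (Fin n) ℝ, Lmap c ∣ (f - polyAct s f)) :
    ∀ f ∈ coinvIdeal W, ∀ g, Lmap c * g = f - polyAct s f → g ∈ coinvIdeal W := by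
  intro f hf
  rw [coinvIdeal] at hf
  induction hf using Submodule.span_induction with
  | mem x hx =>
      intro g hg
      rw [hx.1 s hsW, sub_self] at hg
      rcases mul_eq_zero.mp hg with h | h
      · exact absurd h hα0
      · rw [h]; exact Ideal.zero_mem _
  | zero =>
      intro g hg
      rw [map_zero, sub_self] at hg
      rcases mul_eq_zero.mp hg with h | h
      · exact absurd h hα0
      · rw [h]; exact Ideal.zero_mem _
  | add x y hx hy ihx ihy =>
      intro g hg
      obtain ⟨dx, hdx⟩ := hdvd x
      obtain ⟨dy, hdy⟩ := hdvd y
      have hg' : Lmap c * g = Lmap c * (dx + dy) := by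
        rw [hg, map_add]; rw [show x + y - (polyAct s x + polyAct s y) = (x - polyAct s x) + (y - polyAct s y) by ring, hdx, hdy]; ring
      have := mul_left_cancel₀ hα0 hg'
      rw [this]
      exact Ideal.add_mem _ (ihx dx hdx.symm) (ihy dy hdy.symm)
  | smul a x hx ihx =>
      intro g hg
      obtain ⟨da, hda⟩ := hdvd a
      obtain ⟨dx, hdx⟩ := hdvd x
      have hxJ : x ∈ coinvIdeal W := by rw [coinvIdeal]; exact hx
      have hdxJ : dx ∈ coinvIdeal W := ihx dx hdx.symm
      have hg' : Lmap c * g = Lmap c * (da * x + polyAct s a * dx) := by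
        rw [hg, smul_eq_mul, map_mul]
        have : a * x - polyAct s a * polyAct s x
            = (a - polyAct s a) * x + polyAct s a * (x - polyAct s x) := by ring
        rw [this, hda, hdx]; ring
      have := mul_left_cancel₀ hα0 hg'
      rw [this]
      exact Ideal.add_mem _ (Ideal.mul_mem_left _ _ hxJ) (Ideal.mul_mem_left _ _ hdxJ)

lemma eq_C_of_isHomogeneous_zero {n : ℕ} {f : MvPolynomial (Fin n) ℝ}
    (hf : f.IsHomogeneous 0) : f = C (constantCoeff f) := by
  ext d
  by_cases hd : d = 0
  · subst hd
    rw [coeff_zero_C]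
    rfl
  · rw [hf.coeff_eq_zero (by rwa [Ne, Finsupp.degree_eq_zero_iff]), coeff_C]
    simp [Ne.symm hd]

/-- If `ℓ ∈ R₁` is a strong Lefschetz element of the coinvariant ring `R` of a finite
reflection group `W`, then `ℓ` is not fixed by any reflection of `W`. -/
theorem strong_lefschetz_not_fixed_by_reflection {n : ℕ} (W : Subgroup (GL (Fin n) ℝ))
    [Finite W] (m : ℕ)
    (hm : m = Nat.card {g : GL (Fin n) ℝ // g ∈ W ∧ IsReflection g})
    (p : MvPolynomial (Fin n) ℝ) (hp : p ∈ homogeneousSubmodule (Fin n) ℝ 1)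
    (ℓ : MvPolynomial (Fin n) ℝ ⧸ coinvIdeal W) (hℓ : ℓ = Ideal.Quotient.mk (coinvIdeal W) p)
    (hSL : ∀ i : ℕ, i ≤ m / 2 →
      (∀ x ∈ coinvComponent W i, ∀ y ∈ coinvComponent W i,
        ℓ ^ (m - 2 * i) * x = ℓ ^ (m - 2 * i) * y → x = y) ∧
      (∀ z ∈ coinvComponent W (m - i), ∃ x ∈ coinvComponent W i,
        ℓ ^ (m - 2 * i) * x = z)) :
    ∀ s ∈ W, IsReflection s →
      Ideal.Quotient.mk (coinvIdeal W) (polyAct s p) ≠ Ideal.Quotient.mk (coinvIdeal W) p := by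
  intro s hsW hrefl heq
  -- m ≥ 1
  have hfin : Finite {g : GL (Fin n) ℝ // g ∈ W ∧ IsReflection g} := by
    have : Function.Injective
        (fun x : {g : GL (Fin n) ℝ // g ∈ W ∧ IsReflection g} => (⟨x.1, x.2.1⟩ : W)) := by
      intro a b hab
      have h1 : a.1 = b.1 := congrArg (fun t : ↥W => (t : GL (Fin n) ℝ)) hab
      exact Subtype.ext h1
    exact Finite.of_injective _ this
  have hne : Nonempty {g : GL (Fin n) ℝ // g ∈ W ∧ IsReflection g} := ⟨⟨s, hsW, hrefl⟩⟩
  have hm1 : 1 ≤ m := by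
    rw [hm]
    exact Nat.card_pos
  obtain ⟨hs1, hs2, hs3⟩ := hrefl
  -- matrix facts
  have hA2 : (↑s : Matrix (Fin n) (Fin n) ℝ) * (↑s : Matrix (Fin n) (Fin n) ℝ) = 1 := by
    have := congrArg (fun u : GL (Fin n) ℝ => (↑u : Matrix (Fin n) (Fin n) ℝ)) hs2
    simpa using this
  have hA1 : (↑s : Matrix (Fin n) (Fin n) ℝ) ≠ 1 := by
    intro h
    exact hs1 (Units.ext h)
  have hsinv : s⁻¹ = s := inv_eq_of_mul_eq_one_right hs2
  have hMcoe : (↑(s⁻¹) : Matrix (Fin n) (Fin n) ℝ) = ↑s := by rw [hsinv]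
  obtain ⟨c, hc0, hcA, hcu⟩ := anti_vec (↑s : Matrix (Fin n) (Fin n) ℝ) hA1 hA2 hs3
  set α := Lmap (n := n) c with hαdef
  have hα0 : α ≠ 0 := by
    intro h
    apply hc0
    apply Lmap_inj
    rw [← hαdef, h, map_zero]
  have hTα : polyAct s α = -α := by
    rw [hαdef, polyAct_Lmap, hMcoe, hcA, map_neg]
  have hdvd : ∀ f : MvPolynomial (Fin n) ℝ, α ∣ (f - polyAct s f) := by
    apply dvd_sub_polyAct s (↑s : Matrix (Fin n) (Fin n) ℝ)
    · intro i
      rw [polyAct_X, hMcoe]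
    · exact hA2
    · intro c' hc'
      exact hcu c' hc'
  -- the invariant representative of ℓ
  set T := polyAct (n := n) s with hT
  set p' := C (2⁻¹ : ℝ) * (p + T p) with hp'def
  have hphom : p.IsHomogeneous 1 := (mem_homogeneousSubmodule _ _).mp hp
  have hp'hom : p'.IsHomogeneous 1 := (hphom.add (polyAct_homog s hphom)).C_mul _
  have hTp' : T p' = p' := by
    rw [hp'def, hT, map_mul, polyAct_C, map_add, polyAct_polyAct, hs2, polyAct_one, add_comm]
  have hmkp' : Ideal.Quotient.mk (coinvIdeal W) p' = ℓ := by
    have h2 : Ideal.Quotient.mk (coinvIdeal W) (T p) = Ideal.Quotient.mk (coinvIdeal W) p := heq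
    have : Ideal.Quotient.mk (coinvIdeal W) p' =
        Ideal.Quotient.mk (coinvIdeal W) (C (2⁻¹ : ℝ)) * (Ideal.Quotient.mk (coinvIdeal W) p + Ideal.Quotient.mk (coinvIdeal W) (T p)) := by
      rw [hp'def, map_mul, map_add]
    rw [this, h2, hℓ, ← map_add, ← map_mul]
    congr 1
    rw [← two_mul, ← mul_assoc]
    norm_num
    rw [← map_ofNat (C : ℝ →+* MvPolynomial (Fin n) ℝ) 2, ← map_mul]
    norm_num
  -- strong Lefschetz at i = 0
  obtain ⟨inj0, surj0⟩ := hSL 0 (Nat.zero_le _)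
  simp only [Nat.mul_zero, Nat.sub_zero] at inj0 surj0
  -- the element u
  set u := p' ^ (m - 1) * α with hudef
  have huhom : u.IsHomogeneous m := by
    have h1 : (p' ^ (m - 1)).IsHomogeneous (m - 1) := by
      have := hp'hom.pow (m - 1)
      rwa [one_mul] at this
    have h2 := h1.mul (Lmap_homog c)
    rwa [Nat.sub_add_cancel hm1] at h2
  have humem : Ideal.Quotient.mk (coinvIdeal W) u ∈ coinvComponent W m :=
    ⟨u, (mem_homogeneousSubmodule _ _).mpr huhom, rfl⟩
  obtain ⟨x, hxmem, hxu⟩ := surj0 _ humem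
  obtain ⟨f0, hf0, rfl⟩ := hxmem
  have hf0C : f0 = C (constantCoeff f0) :=
    eq_C_of_isHomogeneous_zero ((mem_homogeneousSubmodule _ _).mp hf0)
  -- u ∈ (coinvIdeal W)
  have hsub : u - p' ^ m * f0 ∈ (coinvIdeal W) := by
    have : ℓ ^ m = Ideal.Quotient.mk (coinvIdeal W) (p' ^ m) := by rw [map_pow, hmkp']
    rw [this] at hxu
    have hxu' : Ideal.Quotient.mk (coinvIdeal W) (p' ^ m * f0) = Ideal.Quotient.mk (coinvIdeal W) u := by
      rw [map_mul]
      exact hxu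
    have hd1 : p' ^ m * f0 - u ∈ coinvIdeal W := Ideal.Quotient.eq.mp hxu'
    have hd2 : -(p' ^ m * f0 - u) ∈ coinvIdeal W := Submodule.neg_mem _ hd1
    rwa [neg_sub] at hd2
  have hTu : T u = -u := by
    rw [hudef, hT, map_mul, map_pow]
    rw [← hT, hTp', hTα]
    ring
  have hTsub : T (u - p' ^ m * f0) ∈ (coinvIdeal W) := polyAct_coinvIdeal W hsW hsub
  have hTsub' : -u - p' ^ m * f0 ∈ (coinvIdeal W) := by
    have : T (u - p' ^ m * f0) = -u - p' ^ m * f0 := by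
      rw [map_sub, hTu]
      congr 1
      rw [map_mul, map_pow, hTp']
      congr 1
      rw [hf0C, hT, polyAct_C]
    rwa [this] at hTsub
  have huJ : u ∈ (coinvIdeal W) := by
    have h2u : u + u ∈ (coinvIdeal W) := by
      have := Ideal.sub_mem (coinvIdeal W) hsub hTsub'
      have heq2 : u - p' ^ m * f0 - (-u - p' ^ m * f0) = u + u := by ring
      rwa [heq2] at this
    have : u = C (2⁻¹ : ℝ) * (u + u) := by
      rw [← two_mul, ← mul_assoc]
      norm_num
      rw [← map_ofNat (C : ℝ →+* MvPolynomial (Fin n) ℝ) 2, ← map_mul]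
      norm_num
    rw [this]
    exact Ideal.mul_mem_left _ _ h2u
  -- apply the Demazure-division lemma
  have hgJ : p' ^ (m - 1) + p' ^ (m - 1) ∈ (coinvIdeal W) := by
    apply quot_mem W hsW c hα0 hdvd u huJ
    rw [← hT, hTu, hudef, hαdef]
    ring
  have hpm1J : p' ^ (m - 1) ∈ (coinvIdeal W) := by
    have : p' ^ (m - 1) = C (2⁻¹ : ℝ) * (p' ^ (m - 1) + p' ^ (m - 1)) := by
      rw [← two_mul, ← mul_assoc]
      norm_num
      rw [← map_ofNat (C : ℝ →+* MvPolynomial (Fin n) ℝ) 2, ← map_mul]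
      norm_num
    rw [this]
    exact Ideal.mul_mem_left _ _ hgJ
  -- conclude
  have hℓm1 : ℓ ^ (m - 1) = 0 := by
    rw [← hmkp', ← map_pow]
    exact (Ideal.Quotient.eq_zero_iff_mem).mpr hpm1J
  have hℓm : ℓ ^ m = 0 := by
    rw [show m = (m - 1) + 1 by omega, pow_succ, hℓm1, zero_mul]
  have h1mem : Ideal.Quotient.mk (coinvIdeal W) (1 : MvPolynomial (Fin n) ℝ) ∈ coinvComponent W 0 :=
    ⟨1, (mem_homogeneousSubmodule _ _).mpr (isHomogeneous_one _ _), rfl⟩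
  have h10 : Ideal.Quotient.mk (coinvIdeal W) (1 : MvPolynomial (Fin n) ℝ) = 0 := by
    apply inj0 _ h1mem 0 (Submodule.zero_mem _)
    rw [hℓm, zero_mul, zero_mul]
  have : (1 : MvPolynomial (Fin n) ℝ) ∈ (coinvIdeal W) := Ideal.Quotient.eq_zero_iff_mem.mp h10
  have := coinvIdeal_le_ker W this
  rw [RingHom.mem_ker, map_one] at this
  exact one_ne_zero this
end

section
/- Let W be a finite reflection group on ℝⁿ with m' reflections. Any nonzero polynomial f ∈ ℝ[x₁,…,xₙ] that is anti-invariant under W (i.e., s·f = −f for every reflection s ∈ W) has degree at least m'. -/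
open MvPolynomial

section Helpers
open Matrix

lemma eval_aeval' {m n : ℕ} (x : Fin n → ℝ) (g : Fin m → MvPolynomial (Fin n) ℝ)
    (p : MvPolynomial (Fin m) ℝ) :
    eval x (aeval g p) = eval (fun i => eval x (g i)) p := by
  rw [aeval_def, eval_eval₂]
  have h : (eval x).comp (algebraMap ℝ (MvPolynomial (Fin n) ℝ)) = RingHom.id ℝ := by
    ext r; simp
  rw [h, eval₂_id]

noncomputable def homog {σ : Type*} : MvPolynomial σ ℝ →ₐ[ℝ] Polynomial (MvPolynomial σ ℝ) :=
  aeval fun i => Polynomial.C (X i) * Polynomial.X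

lemma homog_monomial {σ : Type*} (m : σ →₀ ℕ) (c : ℝ) :
    homog (monomial m c) = Polynomial.C (monomial m c) * Polynomial.X ^ (m.degree) := by
  classical
  rw [homog, aeval_monomial]
  rw [show (m.prod fun i k => (Polynomial.C (X i : MvPolynomial σ ℝ) * Polynomial.X) ^ k)
      = Polynomial.C (m.prod fun i k => (X i : MvPolynomial σ ℝ) ^ k)
        * Polynomial.X ^ m.degree from ?_]
  · rw [IsScalarTower.algebraMap_apply ℝ (MvPolynomial σ ℝ), Polynomial.algebraMap_eq,
        MvPolynomial.algebraMap_eq, ← mul_assoc, ← Polynomial.C_mul, monomial_eq]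
  · rw [Finsupp.prod, Finsupp.degree]
    simp only [mul_pow, Finset.prod_mul_distrib, map_prod, Finset.prod_pow_eq_pow_sum,
      Finsupp.prod, map_pow]
    rfl

lemma coeff_homog {σ : Type*} (f : MvPolynomial σ ℝ) (k : ℕ) :
    (homog f).coeff k = homogeneousComponent k f := by
  induction f using MvPolynomial.induction_on' with
  | add p q hp hq => simp [_root_.map_add, hp, hq]
  | monomial m c =>
      classical
      rw [homog_monomial, Polynomial.coeff_C_mul, Polynomial.coeff_X_pow]
      rw [homogeneousComponent_of_mem (isHomogeneous_monomial c rfl)]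
      by_cases h : m.degree = k <;> simp [h, (by omega : k = m.degree ↔ m.degree = k)]

lemma homogComp_td_ne_zero {σ : Type*} (f : MvPolynomial σ ℝ) (hf : f ≠ 0) :
    homogeneousComponent f.totalDegree f ≠ 0 := by
  classical
  obtain ⟨m, hm, hdeg⟩ := Finset.exists_mem_eq_sup f.support
    (support_nonempty.mpr hf) (fun m => m.sum fun _ e => e)
  intro h0
  have hc : coeff m (homogeneousComponent f.totalDegree f) = coeff m f := by
    rw [coeff_homogeneousComponent, if_pos]
    show (∑ a ∈ m.support, m a) = f.totalDegree
    rw [totalDegree, hdeg]; rfl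
  rw [h0] at hc
  exact mem_support_iff.mp hm hc.symm

lemma natDegree_homog {σ : Type*} (f : MvPolynomial σ ℝ) (hf : f ≠ 0) :
    (homog f).natDegree = f.totalDegree := by
  refine le_antisymm ?_ ?_
  · rw [Polynomial.natDegree_le_iff_coeff_eq_zero]
    intro N hN
    rw [coeff_homog]
    exact homogeneousComponent_eq_zero _ _ hN
  · apply Polynomial.le_natDegree_of_ne_zero
    rw [coeff_homog]
    exact homogComp_td_ne_zero f hf

lemma homog_ne_zero {σ : Type*} (f : MvPolynomial σ ℝ) (hf : f ≠ 0) : homog f ≠ 0 := by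
  intro h
  apply homogComp_td_ne_zero f hf
  rw [← coeff_homog, h, Polynomial.coeff_zero]

lemma totalDegree_mul_eq {σ : Type*} (f g : MvPolynomial σ ℝ) (hf : f ≠ 0) (hg : g ≠ 0) :
    (f * g).totalDegree = f.totalDegree + g.totalDegree := by
  have hfg : f * g ≠ 0 := mul_ne_zero hf hg
  rw [← natDegree_homog _ hfg, ← natDegree_homog _ hf, ← natDegree_homog _ hg, _root_.map_mul,
    Polynomial.natDegree_mul (homog_ne_zero f hf) (homog_ne_zero g hg)]

lemma X_dvd_of_vanish {n : ℕ} (k : Fin n) (p : MvPolynomial (Fin n) ℝ)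
    (h : ∀ x : Fin n → ℝ, x k = 0 → eval x p = 0) : X k ∣ p := by
  classical
  set E : MvPolynomial (Fin n) ℝ →ₐ[ℝ] MvPolynomial (Fin n) ℝ :=
    aeval (fun i => if i = k then 0 else X i) with hEdef
  have hE : ∀ q : MvPolynomial (Fin n) ℝ, X k ∣ q - E q := by
    intro q
    induction q using MvPolynomial.induction_on with
    | C a => simp [hEdef, aeval_C, algebraMap_eq]
    | add p q hp hq =>
        have := dvd_add hp hq
        rwa [show p - E p + (q - E q) = p + q - E (p + q) by rw [_root_.map_add]; ring] at this
    | mul_X p i hp =>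
        rw [_root_.map_mul]
        by_cases hik : i = k
        · subst hik
          have : E (X i) = 0 := by simp [hEdef]
          rw [this, mul_zero, sub_zero]
          exact Dvd.intro_left p rfl
        · have : E (X i) = X i := by simp [hEdef, hik]
          rw [this, show p * X i - E p * X i = (p - E p) * X i by ring]
          exact hp.mul_right _
  have hE0 : E p = 0 := by
    apply MvPolynomial.funext
    intro x
    rw [hEdef, eval_aeval']
    rw [_root_.map_zero]
    apply h
    simp
  have := hE p
  rwa [hE0, sub_zero] at this

noncomputable def ell {n : ℕ} (c : Fin n → ℝ) : MvPolynomial (Fin n) ℝ :=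
  ∑ i, C (c i) * X i

lemma eval_ell {n : ℕ} (c x : Fin n → ℝ) : eval x (ell c) = ∑ i, c i * x i := by
  simp [ell]

lemma coeff_ell {n : ℕ} (c : Fin n → ℝ) (k : Fin n) :
    coeff (Finsupp.single k 1) (ell c) = c k := by
  classical
  rw [ell, coeff_sum]
  rw [Finset.sum_eq_single k]
  · simp [coeff_C_mul, coeff_X]
  · intro i _ hik
    rw [coeff_C_mul, coeff_X', if_neg, mul_zero]
    simp [Finsupp.single_eq_single_iff, hik]
  · simp

lemma ell_ne_zero {n : ℕ} {c : Fin n → ℝ} (hc : c ≠ 0) : ell c ≠ 0 := by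
  obtain ⟨k, hk⟩ := Function.ne_iff.mp hc
  intro h
  apply hk
  have := coeff_ell c k
  rw [h, coeff_zero] at this
  simpa using this.symm

lemma totalDegree_ell {n : ℕ} {c : Fin n → ℝ} (hc : c ≠ 0) : (ell c).totalDegree = 1 := by
  classical
  obtain ⟨k, hk⟩ := Function.ne_iff.mp hc
  refine le_antisymm ?_ ?_
  · refine (totalDegree_finset_sum _ _).trans ?_
    apply Finset.sup_le
    intro i _
    refine (totalDegree_mul _ _).trans ?_
    simp [totalDegree_C, totalDegree_X]
  · by_contra hlt
    have h0 : (ell c).totalDegree = 0 := by omega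
    rw [MvPolynomial.totalDegree_eq_zero_iff] at h0
    have hmem : Finsupp.single k 1 ∈ (ell c).support := by
      rw [mem_support_iff, coeff_ell]
      simpa using hk
    have := h0 _ hmem k
    simp at this

lemma isUnit_eq_C {n : ℕ} (u : MvPolynomial (Fin n) ℝ) (hu : IsUnit u) :
    u.totalDegree = 0 ∧ u ≠ 0 := by
  obtain ⟨v, hv⟩ := hu.exists_right_inv
  have hu0 : u ≠ 0 := by rintro rfl; simp at hv
  have hv0 : v ≠ 0 := by rintro rfl; simp at hv
  have := totalDegree_mul_eq u v hu0 hv0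
  rw [hv, totalDegree_one] at this
  exact ⟨by omega, hu0⟩

lemma eq_C_of_td_zero {n : ℕ} {a : MvPolynomial (Fin n) ℝ} (h : a.totalDegree = 0) :
    a = C (coeff 0 a) := by
  rw [MvPolynomial.totalDegree_eq_zero_iff] at h
  ext m
  rcases eq_or_ne m 0 with rfl | hm
  · simp
  · rw [coeff_C, if_neg (by exact fun h' => hm h'.symm)]
    by_contra h0
    exact hm (Finsupp.ext (h m (mem_support_iff.mpr h0)))

lemma prime_ell {n : ℕ} {c : Fin n → ℝ} (hc : c ≠ 0) : Prime (ell c) := by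
  rw [← UniqueFactorizationMonoid.irreducible_iff_prime]
  constructor
  · intro hu
    have := (isUnit_eq_C _ hu).1
    rw [totalDegree_ell hc] at this
    omega
  · intro a b hab
    have hab0 : a * b ≠ 0 := by rw [← hab]; exact ell_ne_zero hc
    have ha0 : a ≠ 0 := fun h => hab0 (by rw [h, zero_mul])
    have hb0 : b ≠ 0 := fun h => hab0 (by rw [h, mul_zero])
    have hd : a.totalDegree + b.totalDegree = 1 := by
      rw [← totalDegree_mul_eq a b ha0 hb0, ← hab, totalDegree_ell hc]
    rcases Nat.eq_zero_or_pos a.totalDegree with h | h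
    · left
      have h := eq_C_of_td_zero h
      rw [h]
      refine (isUnit_iff_ne_zero.mpr ?_).map (C : ℝ →+* MvPolynomial (Fin n) ℝ)
      intro h0
      exact ha0 (by rw [h, h0, _root_.map_zero])
    · right
      have hb : b.totalDegree = 0 := by omega
      have hb := eq_C_of_td_zero hb
      rw [hb]
      refine (isUnit_iff_ne_zero.mpr ?_).map (C : ℝ →+* MvPolynomial (Fin n) ℝ)
      intro h0
      exact hb0 (by rw [hb, h0, _root_.map_zero])

lemma ell_dvd {n : ℕ} {c : Fin n → ℝ} (hc : c ≠ 0) (f : MvPolynomial (Fin n) ℝ)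
    (h : ∀ x : Fin n → ℝ, (∑ i, c i * x i) = 0 → eval x f = 0) : ell c ∣ f := by
  classical
  obtain ⟨k, hk⟩ := Function.ne_iff.mp hc
  simp only [Pi.zero_apply] at hk
  set τ : Fin n → MvPolynomial (Fin n) ℝ := fun i =>
    if i = k then C (c k)⁻¹ * (X k - ∑ j ∈ Finset.univ.erase k, C (c j) * X j) else X i with hτ
  set σ : Fin n → MvPolynomial (Fin n) ℝ := fun i => if i = k then ell c else X i with hσ
  set T := aeval (R := ℝ) τ with hT
  set S := aeval (R := ℝ) σ with hS
  have hsplit : ell c = C (c k) * X k + ∑ j ∈ Finset.univ.erase k, C (c j) * X j := by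
    rw [ell, ← Finset.add_sum_erase _ _ (Finset.mem_univ k)]
  have hST : ∀ p, S (T p) = p := by
    have : S.comp T = AlgHom.id ℝ (MvPolynomial (Fin n) ℝ) := by
      apply MvPolynomial.algHom_ext
      intro i
      rcases eq_or_ne i k with rfl | hik
      · simp only [AlgHom.comp_apply, AlgHom.id_apply, hT, hτ, aeval_X, if_pos rfl, eq_self_iff_true, if_true]
        rw [_root_.map_mul, _root_.map_sub, _root_.map_sum]
        have h1 : S (X i) = ell c := by rw [hS, aeval_X, hσ]; simp
        have h2 : ∀ j ∈ Finset.univ.erase i, S (C (c j) * X j) = C (c j) * X j := by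
          intro j hj
          have hji : j ≠ i := (Finset.mem_erase.mp hj).1
          rw [_root_.map_mul, hS, aeval_X, hσ, aeval_C]
          simp [hji, algebraMap_eq]
        rw [h1, Finset.sum_congr rfl h2, hsplit, aeval_C]
        rw [add_sub_cancel_right, algebraMap_eq, ← mul_assoc, ← C_mul,
          inv_mul_cancel₀ hk, C_1, one_mul]
      · simp [hT, hτ, hS, hσ, hik]
    intro p
    calc S (T p) = (S.comp T) p := rfl
    _ = p := by rw [this]; rfl
  have hvan : ∀ x : Fin n → ℝ, x k = 0 → eval x (T f) = 0 := by
    intro x hx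
    rw [hT, eval_aeval']
    apply h
    show ∑ i, c i * eval x (τ i) = 0
    have hyk : eval x (τ k) = -(c k)⁻¹ * ∑ j ∈ Finset.univ.erase k, c j * x j := by
      simp only [hτ, if_pos rfl, eq_self_iff_true, if_true, _root_.map_mul, _root_.map_sub, _root_.map_sum,
        eval_C, eval_X, hx]
      ring
    have hyj : ∀ j : Fin n, j ≠ k → eval x (τ j) = x j := by
      intro j hj; simp [hτ, hj]
    rw [← Finset.add_sum_erase _ (fun i => c i * eval x (τ i)) (Finset.mem_univ k)]
    simp only [hyk]
    have hsum : ∑ j ∈ Finset.univ.erase k, c j * eval x (τ j)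
        = ∑ j ∈ Finset.univ.erase k, c j * x j :=
      Finset.sum_congr rfl fun j hj => by rw [hyj j (Finset.mem_erase.mp hj).1]
    rw [hsum]
    field_simp
    ring
  obtain ⟨q, hq⟩ := X_dvd_of_vanish k (T f) hvan
  refine ⟨S q, ?_⟩
  have := congrArg S (congrArg (fun z => z) hq)
  calc f = S (T f) := (hST f).symm
  _ = S (X k) * S q := by rw [hq, _root_.map_mul]
  _ = ell c * S q := by rw [hS, aeval_X, hσ]; simp

lemma one_add_pow {n : ℕ} (M : Matrix (Fin n) (Fin n) ℝ) (h : M * M = 0) (m : ℕ) :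
    (1 + M) ^ m = 1 + (m : ℝ) • M := by
  induction m with
  | zero => simp
  | succ m ih =>
      rw [pow_succ, ih]
      push_cast
      rw [add_smul, one_smul, mul_add, mul_one, add_mul, one_mul, Matrix.smul_mul, h,
        smul_zero, add_zero]
      abel

lemma reflections_eq {n : ℕ} (W : Subgroup (GL (Fin n) ℝ)) [Finite W]
    {s t : GL (Fin n) ℝ} (hs : s ∈ W) (ht : t ∈ W) (hs2 : s * s = 1) (ht2 : t * t = 1)
    (hfix : ∀ x : Fin n → ℝ,
      (↑s : Matrix (Fin n) (Fin n) ℝ) *ᵥ x = x ↔ (↑t : Matrix (Fin n) (Fin n) ℝ) *ᵥ x = x) :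
    s = t := by
  set S : Matrix (Fin n) (Fin n) ℝ := (s : Matrix (Fin n) (Fin n) ℝ) with hSd
  set T : Matrix (Fin n) (Fin n) ℝ := (t : Matrix (Fin n) (Fin n) ℝ) with hTd
  have hSS : S * S = 1 := by rw [hSd, ← Units.val_mul, hs2]; rfl
  have hTT : T * T = 1 := by rw [hTd, ← Units.val_mul, ht2]; rfl
  have hfixS : ∀ v : Fin n → ℝ, S *ᵥ (S *ᵥ v + v) = S *ᵥ v + v := by
    intro v
    rw [Matrix.mulVec_add, Matrix.mulVec_mulVec, hSS, Matrix.one_mulVec, add_comm]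
  have hfixT : ∀ v : Fin n → ℝ, T *ᵥ (T *ᵥ v + v) = T *ᵥ v + v := by
    intro v
    rw [Matrix.mulVec_add, Matrix.mulVec_mulVec, hTT, Matrix.one_mulVec, add_comm]
  set M : Matrix (Fin n) (Fin n) ℝ := S * T - 1 with hMd
  have hMv : ∀ v : Fin n → ℝ, M *ᵥ v = (S * T) *ᵥ v - v := by
    intro v; rw [hMd, Matrix.sub_mulVec, Matrix.one_mulVec]
  have hfixM : ∀ v : Fin n → ℝ, (S * T) *ᵥ (M *ᵥ v) = M *ᵥ v := by
    intro v
    set a : Fin n → ℝ := T *ᵥ v + v with had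
    set b : Fin n → ℝ := S *ᵥ v + v with hbd
    have haS : S *ᵥ a = a := (hfix a).mpr (hfixT v)
    have haT : T *ᵥ a = a := hfixT v
    have hbS : S *ᵥ b = b := hfixS v
    have hbT : T *ᵥ b = b := (hfix b).mp (hfixS v)
    have hab : M *ᵥ v = a - b := by
      rw [hMv, ← Matrix.mulVec_mulVec]
      rw [show T *ᵥ v = a - v by rw [had]; abel]
      rw [Matrix.mulVec_sub, haS]
      rw [hbd, had]
      abel
    rw [hab, Matrix.mulVec_sub, ← Matrix.mulVec_mulVec, ← Matrix.mulVec_mulVec,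
      haT, haS, hbT, hbS]
  have hM2 : M * M = 0 := by
    apply Matrix.toLin'.injective
    rw [_root_.map_zero]
    apply LinearMap.ext
    intro v
    rw [Matrix.toLin'_apply, ← Matrix.mulVec_mulVec, LinearMap.zero_apply,
      hMv (M *ᵥ v), hfixM v, sub_self]
  -- finite order
  set w : W := ⟨s * t, mul_mem hs ht⟩ with hwd
  have hm0 : 0 < orderOf w := orderOf_pos w
  have hwm : w ^ orderOf w = 1 := pow_orderOf_eq_one w
  have hum : (s * t) ^ orderOf w = 1 := by
    have := congrArg (Subtype.val) hwm
    rwa [SubmonoidClass.coe_pow] at this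
  have hmat : (S * T) ^ orderOf w = 1 := by
    have := congrArg (Units.val) hum
    rw [Units.val_pow_eq_pow_val, Units.val_mul] at this
    exact this
  have hST1 : S * T = 1 + M := by rw [hMd]; abel
  rw [hST1, one_add_pow M hM2] at hmat
  have hMn : ((orderOf w : ℝ)) • M = 0 := by
    rwa [add_eq_left] at hmat
  have hM0 : M = 0 := by
    rcases smul_eq_zero.mp hMn with h | h
    · exfalso; have : (orderOf w : ℝ) ≠ 0 := Nat.cast_ne_zero.mpr hm0.ne'
      exact this h
    · exact h
  have hST : S * T = 1 := by rw [hST1, hM0, add_zero]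
  have hst : s * t = 1 := by
    apply Units.ext
    rw [Units.val_mul, Units.val_one]
    exact hST
  have htinv : t⁻¹ = t := inv_eq_of_mul_eq_one_right ht2
  rw [← htinv]
  exact eq_inv_of_mul_eq_one_left hst

lemma exists_c {n : ℕ} (g : GL (Fin n) ℝ) (hg1 : g ≠ 1)
    (hrank : Module.finrank ℝ
      (LinearMap.ker (Matrix.toLin' ((↑g : Matrix (Fin n) (Fin n) ℝ) - 1))) = n - 1) :
    ∃ c : Fin n → ℝ, c ≠ 0 ∧
      ∀ x : Fin n → ℝ,
        ((∑ i, c i * x i) = 0 ↔ (↑g : Matrix (Fin n) (Fin n) ℝ) *ᵥ x = x) := by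
  classical
  have hn : n ≠ 0 := by
    rintro rfl
    apply hg1
    apply Units.ext
    ext i j
    exact i.elim0
  set H := LinearMap.ker (Matrix.toLin' ((↑g : Matrix (Fin n) (Fin n) ℝ) - 1)) with hHd
  have hdim : Module.finrank ℝ (Fin n → ℝ) = n := by
    simp [Module.finrank_pi]
  have hq : Module.finrank ℝ ((Fin n → ℝ) ⧸ H) = 1 := by
    have h1 := Submodule.finrank_quotient_add_finrank H
    rw [hdim, hrank] at h1
    omega
  have e : ((Fin n → ℝ) ⧸ H) ≃ₗ[ℝ] ℝ :=
    LinearEquiv.ofFinrankEq _ _ (by rw [hq, Module.finrank_self])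
  set φ : (Fin n → ℝ) →ₗ[ℝ] ℝ := e.toLinearMap ∘ₗ H.mkQ with hφd
  have hker : ∀ x : Fin n → ℝ, φ x = 0 ↔ x ∈ H := by
    intro x
    rw [hφd, LinearMap.comp_apply]
    constructor
    · intro h
      have : H.mkQ x = 0 := by
        apply e.injective
        rw [_root_.map_zero]
        exact h
      rwa [Submodule.mkQ_apply, Submodule.Quotient.mk_eq_zero] at this
    · intro h
      rw [Submodule.mkQ_apply, (Submodule.Quotient.mk_eq_zero _).mpr h, _root_.map_zero]
  set c : Fin n → ℝ := fun i => φ (Pi.single i 1) with hcd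
  have hφx : ∀ x : Fin n → ℝ, φ x = ∑ i, c i * x i := by
    intro x
    have hx : x = ∑ i, x i • (Pi.single i 1 : Fin n → ℝ) := by
      have : ∀ i : Fin n, x i • (Pi.single i 1 : Fin n → ℝ) = Pi.single i (x i) := by
        intro i
        rw [← Pi.single_smul, smul_eq_mul, mul_one]
      rw [Finset.sum_congr rfl fun i _ => this i, Finset.univ_sum_single]
    conv_lhs => rw [hx]
    rw [_root_.map_sum]
    apply Finset.sum_congr rfl
    intro i _
    rw [LinearMap.map_smul, smul_eq_mul, mul_comm, hcd]
  have hc0 : c ≠ 0 := by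
    intro hc
    apply hg1
    have hφ0 : ∀ x : Fin n → ℝ, φ x = 0 := by
      intro x; rw [hφx, hc]; simp
    have hHtop : ∀ x : Fin n → ℝ, x ∈ H := fun x => (hker x).mp (hφ0 x)
    have : Matrix.toLin' ((↑g : Matrix (Fin n) (Fin n) ℝ) - 1) = 0 := by
      apply LinearMap.ext
      intro x
      exact (LinearMap.mem_ker).mp (hHtop x)
    have hmat : (↑g : Matrix (Fin n) (Fin n) ℝ) - 1 = 0 :=
      Matrix.toLin'.injective (by rw [this, _root_.map_zero])
    apply Units.ext
    have := sub_eq_zero.mp hmat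
    simpa using this
  refine ⟨c, hc0, fun x => ?_⟩
  rw [← hφx, hker x, hHd, LinearMap.mem_ker, Matrix.toLin'_apply, Matrix.sub_mulVec,
    Matrix.one_mulVec, sub_eq_zero]

lemma prod_primes_dvd' {α : Type*} [CommMonoidWithZero α] [IsCancelMulZero α] {ι : Type*} [DecidableEq ι]
    (s : Finset ι) (p : ι → α) (hp : ∀ i ∈ s, Prime (p i))
    (hna : ∀ i ∈ s, ∀ j ∈ s, i ≠ j → ¬ Associated (p i) (p j))
    (a : α) (hd : ∀ i ∈ s, p i ∣ a) : (∏ i ∈ s, p i) ∣ a := by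
  induction s using Finset.induction_on with
  | empty => simpa using one_dvd a
  | @insert i s his ih =>
      have hps : ∀ j ∈ s, Prime (p j) := fun j hj => hp j (Finset.mem_insert_of_mem hj)
      obtain ⟨q, hq⟩ := ih hps
        (fun j hj j' hj' hne => hna j (Finset.mem_insert_of_mem hj) j'
          (Finset.mem_insert_of_mem hj') hne)
        (fun j hj => hd j (Finset.mem_insert_of_mem hj))
      have hpi : Prime (p i) := hp i (Finset.mem_insert_self i s)
      have hpiq : p i ∣ q := by
        have hdia : p i ∣ (∏ j ∈ s, p j) * q := by rw [← hq]; exact hd i (Finset.mem_insert_self i s)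
        rcases hpi.dvd_or_dvd hdia with h | h
        · exfalso
          obtain ⟨j, hj, hdj⟩ := (hpi.dvd_finset_prod_iff _).mp h
          have hij : i ≠ j := fun he => his (he ▸ hj)
          exact hna i (Finset.mem_insert_self i s) j (Finset.mem_insert_of_mem hj) hij
            (hpi.associated_of_dvd (hps j hj) hdj)
        · exact h
      obtain ⟨r, hr⟩ := hpiq
      refine ⟨r, ?_⟩
      rw [Finset.prod_insert his, hq, hr, ← mul_assoc, mul_comm (∏ j ∈ s, p j) (p i), mul_assoc]

lemma totalDegree_prod_eq {σ : Type*} {ι : Type*} [DecidableEq ι] (s : Finset ι)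
    (p : ι → MvPolynomial σ ℝ) (hp : ∀ i ∈ s, p i ≠ 0) :
    (∏ i ∈ s, p i).totalDegree = ∑ i ∈ s, (p i).totalDegree := by
  induction s using Finset.induction_on with
  | empty => simp
  | @insert i s his ih =>
      rw [Finset.prod_insert his, Finset.sum_insert his,
        totalDegree_mul_eq _ _ (hp i (Finset.mem_insert_self i s))
          (Finset.prod_ne_zero_iff.mpr fun j hj => hp j (Finset.mem_insert_of_mem hj)),
        ih (fun j hj => hp j (Finset.mem_insert_of_mem hj))]

end Helpers

open Matrix

/-- A nonzero polynomial anti-invariant under a finite reflection group `W` with `m'`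
reflections has total degree at least `m'`. -/
theorem antiinvariant_degree_ge {n : ℕ} (W : Subgroup (GL (Fin n) ℝ)) [Finite W]
    (f : MvPolynomial (Fin n) ℝ) (hf : f ≠ 0)
    (hanti : ∀ s ∈ W, IsReflection s → polyAct s f = -f) :
    Nat.card {g : GL (Fin n) ℝ // g ∈ W ∧ IsReflection g} ≤ f.totalDegree := by
  classical
  have : Fintype W := Fintype.ofFinite W
  have hfinR : Fintype {g : GL (Fin n) ℝ // g ∈ W ∧ IsReflection g} := by
    apply Fintype.ofInjective (fun r : {g : GL (Fin n) ℝ // g ∈ W ∧ IsReflection g} =>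
      (⟨r.1, r.2.1⟩ : W))
    intro r r' h
    have : (r.1 : GL (Fin n) ℝ) = r'.1 := congrArg (Subtype.val : W → GL (Fin n) ℝ) h
    exact Subtype.ext this
  have hex : ∀ r : {g : GL (Fin n) ℝ // g ∈ W ∧ IsReflection g},
      ∃ c : Fin n → ℝ, c ≠ 0 ∧
        ∀ x : Fin n → ℝ,
          ((∑ i, c i * x i) = 0 ↔ (↑(r.1) : Matrix (Fin n) (Fin n) ℝ) *ᵥ x = x) :=
    fun r => exists_c r.1 r.2.2.1 r.2.2.2.2
  choose c hc0 hcker using hex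
  have hdvd : ∀ r, ell (c r) ∣ f := by
    intro r
    apply ell_dvd (hc0 r)
    intro x hx
    have hfix : (↑(r.1) : Matrix (Fin n) (Fin n) ℝ) *ᵥ x = x := (hcker r x).mp hx
    have ha := hanti r.1 r.2.1 r.2.2
    have heq := congrArg (eval x) ha
    rw [polyAct, eval_aeval', _root_.map_neg] at heq
    have hinv : (r.1)⁻¹ = r.1 := inv_eq_of_mul_eq_one_right r.2.2.2.1
    have hpt : (fun i => eval x (∑ j, ((↑((r.1)⁻¹) : Matrix (Fin n) (Fin n) ℝ) i j) • X j))
        = x := by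
      funext i
      rw [hinv]
      have : eval x (∑ j, ((↑(r.1) : Matrix (Fin n) (Fin n) ℝ) i j) • X j)
          = ((↑(r.1) : Matrix (Fin n) (Fin n) ℝ) *ᵥ x) i := by
        rw [_root_.map_sum]
        simp [Matrix.mulVec, dotProduct, smul_eq_C_mul]
      rw [this, hfix]
    rw [hpt] at heq
    linarith
  have hprime : ∀ r, Prime (ell (c r)) := fun r => prime_ell (hc0 r)
  have hna : ∀ r r', r ≠ r' → ¬ Associated (ell (c r)) (ell (c r')) := by
    intro r r' hne hassoc
    apply hne
    have hzs : ∀ x : Fin n → ℝ, ((∑ i, c r i * x i) = 0 ↔ (∑ i, c r' i * x i) = 0) := by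
      obtain ⟨u, hu⟩ := hassoc
      intro x
      have h1 := congrArg (eval x) hu
      rw [_root_.map_mul, eval_ell, eval_ell] at h1
      have hu0 : eval x (↑u : MvPolynomial (Fin n) ℝ) ≠ 0 :=
        (u.isUnit.map (eval x)).ne_zero
      constructor
      · intro h; rw [← h1, h, zero_mul]
      · intro h
        rw [← h1] at h
        rcases mul_eq_zero.mp h with h' | h'
        · exact h'
        · exact absurd h' hu0
    have hfixiff : ∀ x : Fin n → ℝ,
        ((↑(r.1) : Matrix (Fin n) (Fin n) ℝ) *ᵥ x = x ↔
          (↑(r'.1) : Matrix (Fin n) (Fin n) ℝ) *ᵥ x = x) :=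
      fun x => (hcker r x).symm.trans ((hzs x).trans (hcker r' x))
    exact Subtype.ext
      (reflections_eq W r.2.1 r'.2.1 r.2.2.2.1 r'.2.2.2.1 hfixiff)
  have hPd : (∏ r, ell (c r)) ∣ f :=
    prod_primes_dvd' Finset.univ _ (fun r _ => hprime r)
      (fun r _ r' _ hne => hna r r' hne) f (fun r _ => hdvd r)
  obtain ⟨q, hq⟩ := hPd
  have hq0 : q ≠ 0 := fun h => hf (by rw [hq, h, mul_zero])
  have hP0 : (∏ r, ell (c r)) ≠ 0 :=
    Finset.prod_ne_zero_iff.mpr fun r _ => ell_ne_zero (hc0 r)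
  have hdeg : (∏ r, ell (c r)).totalDegree
      = Nat.card {g : GL (Fin n) ℝ // g ∈ W ∧ IsReflection g} := by
    rw [totalDegree_prod_eq _ _ (fun r _ => ell_ne_zero (hc0 r))]
    rw [Finset.sum_congr rfl (fun r _ => totalDegree_ell (hc0 r))]
    rw [Finset.sum_const, smul_eq_mul, mul_one, Nat.card_eq_fintype_card, Finset.card_univ]
  calc Nat.card {g : GL (Fin n) ℝ // g ∈ W ∧ IsReflection g}
      = (∏ r, ell (c r)).totalDegree := hdeg.symm
  _ ≤ f.totalDegree := by
      rw [hq, totalDegree_mul_eq _ _ hP0 hq0]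
      omega
end
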